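/- Let T = (V,E) be a finite tree containing an edge {u,v} with both deg_V(u) ∈ {2,3} and deg_V(v) ∈ {2,3}. Let T_v be the graph (V, E ∖ {e ∈ E : u ∈ e and v ∉ e}) and let X_v be the vertex set of the connected component of T_v containing v; define X_u analogously (with the roles of u and v swapped). Let D_g(H) denote the set of all globally minimal defensive alliances of a graph H. Then D_g(T) = ( D_g(T[X_v]) ∪ D_g(T[X_u]) ∪ {{u,v}} ) ∖ { {u}, {v} }, where T[X] denotes the subgraph of T induced by X. -/

import Mathlib

/-- `degIn G X v` is the number of neighbors of `v` lying in the set `X`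
(denoted `deg_X(v)` in the paper). -/
noncomputable def degIn {V : Type*} (G : SimpleGraph V) (X : Set V) (v : V) : ℕ :=
  {u | u ∈ X ∧ G.Adj v u}.ncard

/-- `A` is a defensive alliance of `G`: every `v ∈ A` satisfies
`deg_A(v) + 1 ≥ deg_{V∖A}(v)`. -/
def IsDefensiveAlliance {V : Type*} (G : SimpleGraph V) (A : Set V) : Prop :=
  ∀ v ∈ A, degIn G A v + 1 ≥ degIn G Aᶜ v

/-- A nonempty defensive alliance is globally minimal if no nonempty proper
subset is a defensive alliance. -/
def IsGloballyMinimalDA {V : Type*} (G : SimpleGraph V) (A : Set V) : Prop :=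
  A.Nonempty ∧ IsDefensiveAlliance G A ∧
    ∀ B : Set V, B ⊂ A → B.Nonempty → ¬ IsDefensiveAlliance G B

/-- A nonempty defensive alliance is locally minimal if for every `v ∈ A`,
the set `A ∖ {v}` is not a nonempty defensive alliance. -/
def IsLocallyMinimalDA {V : Type*} (G : SimpleGraph V) (A : Set V) : Prop :=
  A.Nonempty ∧ IsDefensiveAlliance G A ∧
    ∀ v ∈ A, ¬ ((A \ {v}).Nonempty ∧ IsDefensiveAlliance G (A \ {v}))

/-!
Both endpoints have degree at most 3, so `{u, v}` is a defensive alliance, while neither `{u}` nor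
`{v}` is one since their degree is at least 2. A globally minimal alliance `A ≠ {u, v}` of `T`
therefore misses an endpoint. Every vertex of `X_v` other than `u` has all its neighbours in `X_v`,
so if `u ∉ A` then `A ∩ (X_v ∖ {u})` is again an alliance; with the symmetric fact, minimality puts
`A` inside `X_v ∖ {u}` or `X_u ∖ {v}`. For such sets the relevant degrees in `T` and in `T[X_v]`
agree, so being a (globally minimal) alliance means the same in both graphs. Conversely, `u` is a
leaf of `T[X_v]` because `T` is acyclic, so `{u}` is an alliance there and the only globally
minimal one containing `u`.
-/

open SimpleGraph Set

section

variable {V : Type*}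

section DefensiveAlliance

variable (G : SimpleGraph V)

lemma degIn_congr {A B : Set V} {w : V} (h : ∀ x, G.Adj w x → (x ∈ A ↔ x ∈ B)) :
    degIn G A w = degIn G B w := by
  unfold degIn
  congr 1
  ext x
  exact ⟨fun ⟨hx, hwx⟩ => ⟨(h x hwx).1 hx, hwx⟩, fun ⟨hx, hwx⟩ => ⟨(h x hwx).2 hx, hwx⟩⟩

lemma degIn_add_degIn_compl [Finite V] (A : Set V) (w : V) :
    degIn G A w + degIn G Aᶜ w = degIn G univ w := by
  unfold degIn
  rw [← ncard_union_eq (disjoint_left.2 fun x hA hAc => hAc.1 hA.1)]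
  congr 1
  ext x
  by_cases hx : x ∈ A <;> simp [hx]

variable {G}

lemma isDefensiveAlliance_singleton_iff [Finite V] {w : V} :
    IsDefensiveAlliance G {w} ↔ degIn G univ w ≤ 1 := by
  have hself : degIn G {w} w = 0 := by
    have : {x | x ∈ ({w} : Set V) ∧ G.Adj w x} = ∅ :=
      eq_empty_of_forall_notMem fun x ⟨hxw, hwx⟩ => G.ne_of_adj hwx (hxw : x = w).symm
    rw [degIn, this, ncard_empty]
  have := degIn_add_degIn_compl G {w} w
  simp only [IsDefensiveAlliance, mem_singleton_iff, forall_eq]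
  omega

lemma isDefensiveAlliance_pair [Finite V] {u v : V} (huv : G.Adj u v)
    (hu : degIn G univ u ≤ 3) (hv : degIn G univ v ≤ 3) :
    IsDefensiveAlliance G {u, v} := by
  have key : ∀ {a b : V}, G.Adj a b → degIn G univ a ≤ 3 →
      degIn G {a, b} a + 1 ≥ degIn G {a, b}ᶜ a := by
    intro a b hab ha
    have hpair : degIn G {a, b} a = 1 := by
      rw [degIn, ← ncard_singleton b]
      congr 1
      ext x
      simp only [mem_insert_iff, mem_singleton_iff, mem_ofPred_eq]
      exact ⟨fun ⟨hx, hax⟩ => hx.resolve_left (G.ne_of_adj hax).symm,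
        fun hx => ⟨Or.inr hx, hx ▸ hab⟩⟩
    have := degIn_add_degIn_compl G {a, b} a
    omega
  rintro w (rfl | rfl)
  · exact key huv hu
  · rw [pair_comm]
    exact key huv.symm hv

lemma IsDefensiveAlliance.inter {A S : Set V} (hA : IsDefensiveAlliance G A)
    (hS : ∀ w ∈ A ∩ S, ∀ x, G.Adj w x → x ∈ A → x ∈ S) :
    IsDefensiveAlliance G (A ∩ S) := by
  intro w hw
  have hmem : ∀ x, G.Adj w x → (x ∈ A ∩ S ↔ x ∈ A) :=
    fun x hwx => ⟨fun hx => hx.1, fun hx => ⟨hx, hS w hw x hwx hx⟩⟩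
  rw [degIn_congr G hmem,
    degIn_congr G (A := (A ∩ S)ᶜ) (B := Aᶜ) fun x hwx => not_congr (hmem x hwx)]
  exact hA w hw.1

lemma IsGloballyMinimalDA.eq_of_subset {A B : Set V} (hA : IsGloballyMinimalDA G A)
    (hBA : B ⊆ A) (hB : B.Nonempty) (hDA : IsDefensiveAlliance G B) : B = A := by
  by_contra hne
  exact hA.2.2 B (hBA.ssubset_of_ne hne) hB hDA

lemma isGloballyMinimalDA_pair [Finite V] {u v : V} (huv : G.Adj u v)
    (hu : 2 ≤ degIn G univ u ∧ degIn G univ u ≤ 3) (hv : 2 ≤ degIn G univ v ∧ degIn G univ v ≤ 3) :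
    IsGloballyMinimalDA G {u, v} := by
  refine ⟨insert_nonempty _ _, isDefensiveAlliance_pair huv hu.2 hv.2, fun B hB hne hDA => ?_⟩
  rcases subset_pair_iff_eq.1 hB.subset with rfl | rfl | rfl | rfl
  · exact not_nonempty_empty hne
  · exact absurd (isDefensiveAlliance_singleton_iff.1 hDA) (by omega)
  · exact absurd (isDefensiveAlliance_singleton_iff.1 hDA) (by omega)
  · exact hB.ne rfl

end DefensiveAlliance

section Induce

variable {G : SimpleGraph V} {X : Set V}

lemma degIn_induce (B : Set X) (w : X) : degIn (G.induce X) B w = degIn G (Subtype.val '' B) w := by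
  unfold degIn
  rw [← ncard_image_of_injective _ Subtype.val_injective]
  congr 1
  ext x
  constructor
  · rintro ⟨y, ⟨hyB, hwy⟩, rfl⟩
    exact ⟨mem_image_of_mem _ hyB, hwy⟩
  · rintro ⟨⟨y, hyB, rfl⟩, hwy⟩
    exact ⟨y, ⟨hyB, hwy⟩, rfl⟩

lemma degIn_induce_compl (B : Set X) {w : X} (hw : ∀ x, G.Adj w x → x ∈ X) :
    degIn (G.induce X) Bᶜ w = degIn G (Subtype.val '' B)ᶜ w := by
  rw [degIn_induce]
  refine degIn_congr G fun x hwx => ?_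
  lift x to X using hw x hwx
  simp [Subtype.val_injective.mem_set_image]

lemma isDefensiveAlliance_induce_iff {B : Set X} (hB : ∀ b ∈ B, ∀ x, G.Adj b x → x ∈ X) :
    IsDefensiveAlliance (G.induce X) B ↔ IsDefensiveAlliance G (Subtype.val '' B) := by
  constructor
  · rintro h _ ⟨w, hw, rfl⟩
    rw [← degIn_induce, ← degIn_induce_compl _ (hB w hw)]
    exact h w hw
  · intro h w hw
    rw [degIn_induce, degIn_induce_compl _ (hB w hw)]
    exact h w (mem_image_of_mem _ hw)

lemma isGloballyMinimalDA_induce_iff {B : Set X} (hB : ∀ b ∈ B, ∀ x, G.Adj b x → x ∈ X) :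
    IsGloballyMinimalDA (G.induce X) B ↔ IsGloballyMinimalDA G (Subtype.val '' B) := by
  have hinj := Subtype.val_injective.injOn (s := (univ : Set X))
  have hsub : ∀ {B'}, B' ⊆ B → ∀ b ∈ B', ∀ x, G.Adj b x → x ∈ X := fun h b hb => hB b (h hb)
  simp only [IsGloballyMinimalDA, image_nonempty, isDefensiveAlliance_induce_iff hB]
  refine and_congr_right fun _ => and_congr_right fun _ => ⟨fun h C hC hne hDA => ?_, ?_⟩
  · obtain ⟨B', hB'B, rfl⟩ := subset_image_iff.1 hC.subset
    rw [hinj.image_ssubset_image_iff (subset_univ _) (subset_univ _)] at hC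
    exact h B' hC hne.of_image ((isDefensiveAlliance_induce_iff (hsub hB'B)).2 hDA)
  · intro h B' hB' hne hDA
    exact h _ ((hinj.image_ssubset_image_iff (subset_univ _) (subset_univ _)).2 hB')
      (hne.image _) ((isDefensiveAlliance_induce_iff (hsub hB'.subset)).1 hDA)

end Induce

section Branch

variable {T : SimpleGraph V} {u v w x : V}

/-- The paper's `X_v` for the edge `uv`: the vertices on `v`'s side of `uv`, together with `u`. -/
def branch (T : SimpleGraph V) (u v : V) : Set V :=
  ((T.deleteEdges {e : Sym2 V | u ∈ e ∧ v ∉ e}).connectedComponentMk v).supp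

lemma mem_branch_iff :
    w ∈ branch T u v ↔ (T.deleteEdges {e : Sym2 V | u ∈ e ∧ v ∉ e}).Reachable w v := by
  rw [branch, ConnectedComponent.mem_supp_iff, ConnectedComponent.eq]

lemma self_mem_branch : v ∈ branch T u v :=
  mem_branch_iff.2 .rfl

lemma mem_branch_of_adj (huv : T.Adj u v) : u ∈ branch T u v :=
  mem_branch_iff.2 (deleteEdges_adj.2 ⟨huv, fun h => h.2 (Sym2.mem_mk_right u v)⟩).reachable

lemma mem_branch_of_adj_of_mem (huv : T.Adj u v) (hw : w ∈ branch T u v) (hwu : w ≠ u)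
    (hwx : T.Adj w x) : x ∈ branch T u v := by
  obtain rfl | hxu := eq_or_ne x u
  · exact mem_branch_of_adj huv
  · have hxw : (T.deleteEdges {e : Sym2 V | u ∈ e ∧ v ∉ e}).Adj x w :=
      deleteEdges_adj.2 ⟨hwx.symm, by simp [hwu.symm, hxu.symm]⟩
    exact mem_branch_iff.2 (hxw.reachable.trans (mem_branch_iff.1 hw))

lemma adj_mem_branch_union (huv : T.Adj u v) (hx : x ∈ branch T u v) (hxw : T.Adj x w) :
    w ∈ branch T u v ∪ branch T v u := by
  obtain rfl | hxu := eq_or_ne x u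
  · exact Or.inr (mem_branch_of_adj_of_mem huv.symm self_mem_branch huv.ne hxw)
  · exact Or.inl (mem_branch_of_adj_of_mem huv hx hxu hxw)

lemma mem_branch_or_mem_branch (hT : T.Connected) (huv : T.Adj u v) (w : V) :
    w ∈ branch T u v ∨ w ∈ branch T v u := by
  by_contra hw
  obtain ⟨d, -, hd, hd'⟩ :=
    (hT v w).some.exists_boundary_dart (branch T u v ∪ branch T v u) (Or.inl self_mem_branch) hw
  refine hd' (hd.elim (fun h => adj_mem_branch_union huv h d.adj) fun h => ?_)
  rw [union_comm]
  exact adj_mem_branch_union huv.symm h d.adj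

lemma eq_of_adj_of_mem_branch (hT : T.IsAcyclic) (huv : T.Adj u v) (hux : T.Adj u x)
    (hx : x ∈ branch T u v) : x = v := by
  by_contra hxv
  refine isBridge_iff.1 (isAcyclic_iff_forall_adj_isBridge.1 hT hux) ?_
  have hvx : (T.deleteEdges {s(u, x)}).Reachable v x := by
    refine (Reachable.mono (deleteEdges_anti ?_) (mem_branch_iff.1 hx)).symm
    simp [huv.ne', Ne.symm hxv]
  exact (deleteEdges_adj.2 ⟨huv, by simp [hux.ne, Ne.symm hxv]⟩).reachable.trans hvx

lemma isDefensiveAlliance_induce_branch_singleton [Finite V] (hT : T.IsAcyclic)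
    (huv : T.Adj u v) :
    IsDefensiveAlliance (T.induce (branch T u v)) {⟨u, mem_branch_of_adj huv⟩} := by
  rw [isDefensiveAlliance_singleton_iff, degIn_induce, image_univ, Subtype.range_coe, degIn,
    ← ncard_singleton v]
  exact ncard_le_ncard fun x ⟨hx, hux⟩ => eq_of_adj_of_mem_branch hT huv hux hx

end Branch

namespace IsGloballyMinimalDA

variable {T : SimpleGraph V} {u v : V} {A : Set V}

lemma subset_branch_diff (hA : IsGloballyMinimalDA T A) (huv : T.Adj u v) (hu : u ∉ A)
    {a : V} (ha : a ∈ A) (ha' : a ∈ branch T u v \ {u}) : A ⊆ branch T u v \ {u} := by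
  have hDA : IsDefensiveAlliance T (A ∩ (branch T u v \ {u})) :=
    hA.2.1.inter fun w hw x hwx hxA =>
      ⟨mem_branch_of_adj_of_mem huv hw.2.1 hw.2.2 hwx, fun hxu => hu (hxu ▸ hxA)⟩
  rw [← hA.eq_of_subset inter_subset_left ⟨a, ha, ha'⟩ hDA]
  exact inter_subset_right

lemma eq_pair_or_subset_branch_diff [Finite V] (hA : IsGloballyMinimalDA T A)
    (hT : T.Connected) (huv : T.Adj u v) (hu : degIn T univ u ≤ 3) (hv : degIn T univ v ≤ 3) :
    A = {u, v} ∨ A ⊆ branch T u v \ {u} ∨ A ⊆ branch T v u \ {v} := by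
  by_cases huA : u ∈ A <;> by_cases hvA : v ∈ A
  · exact Or.inl (hA.eq_of_subset (pair_subset huA hvA) (insert_nonempty _ _)
      (isDefensiveAlliance_pair huv hu hv)).symm
  · exact Or.inr (Or.inr (hA.subset_branch_diff huv.symm hvA huA ⟨self_mem_branch, huv.ne⟩))
  · exact Or.inr (Or.inl (hA.subset_branch_diff huv huA hvA ⟨self_mem_branch, huv.ne'⟩))
  · obtain ⟨a, ha⟩ := hA.1
    rcases mem_branch_or_mem_branch hT huv a with hau | hav
    · exact Or.inr (Or.inl (hA.subset_branch_diff huv huA ha ⟨hau, ne_of_mem_of_not_mem ha huA⟩))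
    · exact Or.inr (Or.inr
        (hA.subset_branch_diff huv.symm hvA ha ⟨hav, ne_of_mem_of_not_mem ha hvA⟩))

lemma exists_induce_branch (hA : IsGloballyMinimalDA T A) (huv : T.Adj u v)
    (hAX : A ⊆ branch T u v \ {u}) :
    ∃ B : Set (branch T u v),
      IsGloballyMinimalDA (T.induce (branch T u v)) B ∧ Subtype.val '' B = A := by
  have himage : Subtype.val '' (Subtype.val ⁻¹' A : Set (branch T u v)) = A := by
    rw [Subtype.image_preimage_coe, inter_eq_right]
    exact hAX.trans sdiff_subset
  refine ⟨Subtype.val ⁻¹' A, (isGloballyMinimalDA_induce_iff fun b hb x hbx => ?_).2 ?_, himage⟩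
  · exact mem_branch_of_adj_of_mem huv b.2 (hAX hb).2 hbx
  · rwa [himage]

lemma of_induce_branch [Finite V] {B : Set (branch T u v)}
    (hB : IsGloballyMinimalDA (T.induce (branch T u v)) B) (hT : T.IsAcyclic) (huv : T.Adj u v)
    (hBu : Subtype.val '' B ≠ {u}) : IsGloballyMinimalDA T (Subtype.val '' B) := by
  have hu : ∀ b ∈ B, b.1 ≠ u := by
    intro b hb hbu
    obtain rfl : b = ⟨u, mem_branch_of_adj huv⟩ := Subtype.ext hbu
    refine hBu ?_
    rw [← hB.eq_of_subset (singleton_subset_iff.2 hb) (singleton_nonempty _)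
      (isDefensiveAlliance_induce_branch_singleton hT huv), image_singleton]
  exact (isGloballyMinimalDA_induce_iff fun b hb x hbx =>
    mem_branch_of_adj_of_mem huv b.2 (hu b hb) hbx).1 hB

end IsGloballyMinimalDA

end

/-- Splitting a finite tree at an edge `{u,v}` whose endpoints both
have degree 2 or 3: with `T_v = (V, E ∖ {e ∈ E : u ∈ e ∧ v ∉ e})`, `X_v` the
vertex set of the connected component of `T_v` containing `v` (and `X_u`
defined symmetrically), the globally minimal defensive alliances of `T` are
`(D_g(T[X_v]) ∪ D_g(T[X_u]) ∪ {{u,v}}) ∖ {{u}, {v}}`. -/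
theorem globallyMinimalDA_tree_split {V : Type*} [Fintype V]
    (T : SimpleGraph V) (hT : T.IsTree) (u v : V) (huv : T.Adj u v)
    (hdu : degIn T Set.univ u = 2 ∨ degIn T Set.univ u = 3)
    (hdv : degIn T Set.univ v = 2 ∨ degIn T Set.univ v = 3)
    (Xv Xu : Set V)
    (hXv : Xv = ((T.deleteEdges {e : Sym2 V | u ∈ e ∧ v ∉ e}).connectedComponentMk v).supp)
    (hXu : Xu = ((T.deleteEdges {e : Sym2 V | v ∈ e ∧ u ∉ e}).connectedComponentMk u).supp) :
    {A : Set V | IsGloballyMinimalDA T A} =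
      (((fun B : Set Xv => Subtype.val '' B) ''
          {B : Set Xv | IsGloballyMinimalDA (T.induce Xv) B}) ∪
       ((fun B : Set Xu => Subtype.val '' B) ''
          {B : Set Xu | IsGloballyMinimalDA (T.induce Xu) B}) ∪
       {({u, v} : Set V)}) \ {({u} : Set V), ({v} : Set V)} := by
  obtain rfl : Xv = branch T u v := hXv
  obtain rfl : Xu = branch T v u := hXu
  have hu : 2 ≤ degIn T univ u ∧ degIn T univ u ≤ 3 := by omega
  have hv : 2 ≤ degIn T univ v ∧ degIn T univ v ≤ 3 := by omega
  ext A
  simp only [mem_ofPred_eq, mem_sdiff, mem_union, mem_image, mem_singleton_iff, mem_insert_iff,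
    not_or]
  constructor
  · intro hA
    refine ⟨?_, fun hAu => ?_, fun hAv => ?_⟩
    · rcases hA.eq_pair_or_subset_branch_diff hT.connected huv hu.2 hv.2 with rfl | hAX | hAX
      · exact Or.inr rfl
      · exact Or.inl (Or.inl (hA.exists_induce_branch huv hAX))
      · exact Or.inl (Or.inr (hA.exists_induce_branch huv.symm hAX))
    · exact absurd (isDefensiveAlliance_singleton_iff.1 (hAu ▸ hA.2.1)) (by omega)
    · exact absurd (isDefensiveAlliance_singleton_iff.1 (hAv ▸ hA.2.1)) (by omega)
  · rintro ⟨(⟨B, hB, rfl⟩ | ⟨B, hB, rfl⟩) | rfl, hAu, hAv⟩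
    · exact hB.of_induce_branch hT.isAcyclic huv hAu
    · exact hB.of_induce_branch hT.isAcyclic huv.symm hAv
    · exact isGloballyMinimalDA_pair huv hu hv
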